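/- arXiv:2501.19081 — 2 statements merged into one kernel-verified Lean document; each statement's English description precedes it below -/
import Mathlib

section
/- Let C be a closed walk starting at the root vertex (v) in the digraph D(H, v) associated to the k-walk-tree of a k-uniform hypergraph H, and let X be the set of vertices of H visited by C (i.e., the image under the projection π of the vertices of the walk-tree visited by C). Then |X| ≤ ⌊(k−1)/k · |E(C)|⌋ + 1, where |E(C)| is the length of C. -/
open Polynomial

universe u

/-- A hypergraph: a finite vertex set together with a multiset of hyperedges
(multi-edges are allowed). -/
structure HGraph (V : Type u) where
  verts : Finset V
  edges : Multiset (Finset V)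

namespace HGraph

variable {V : Type u}

section Basic

variable [DecidableEq V]

/-- The sub-hypergraph induced on a vertex subset `S`. -/
def induce (H : HGraph V) (S : Finset V) : HGraph V :=
  ⟨H.verts ∩ S, H.edges.filter fun e => e ⊆ S⟩

/-- `H` is `k`-uniform. -/
def IsUniform (H : HGraph V) (k : ℕ) : Prop := ∀ e ∈ H.edges, e.card = k

open scoped Classical in
/-- `p(H, i)`: the number of matchings of `i` (pairwise disjoint) hyperedges of `H`. -/
noncomputable def matchingCount (H : HGraph V) (i : ℕ) : ℕ :=
  ((H.edges.powersetCard i).filter fun M => M.Pairwise Disjoint).card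

/-- The matching polynomial `m_k(H, x) = ∑ (-1)^i p(H,i) x^(n - k i)`. -/
noncomputable def matchingPoly (k : ℕ) (H : HGraph V) : Polynomial ℚ :=
  ∑ i ∈ Finset.range (H.verts.card / k + 1),
    Polynomial.C ((-1 : ℚ) ^ i * (H.matchingCount i : ℚ)) *
      Polynomial.X ^ (H.verts.card - k * i)

/-- A perfect matching: pairwise disjoint hyperedges covering all vertices. -/
def IsPerfectMatching (H : HGraph V) (M : Multiset (Finset V)) : Prop :=
  M ≤ H.edges ∧ M.Pairwise Disjoint ∧ ∀ v ∈ H.verts, ∃ e ∈ M, v ∈ e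

/-- A walk is recorded as a start vertex `v` and a list of steps `(eᵢ, vᵢ)`.
`WalkIncidence` says consecutive vertices are incident with the corresponding edges. -/
def WalkIncidence (v : V) (s : List (Finset V × V)) : Prop :=
  ∀ i < s.length,
    (v :: s.map Prod.snd).getD i v ∈ (s.getD i (∅, v)).1 ∧
    (s.getD i (∅, v)).2 ∈ (s.getD i (∅, v)).1

/-- `H` contains a Berge-cycle: a closed Berge-walk of length `≥ 1` whose edge
occurrences are distinct (as a sub-multiset of `H.edges`, so a repeated multi-edge
does give a Berge-cycle) and whose vertices are distinct except for the endpoints. -/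
def HasBergeCycle (H : HGraph V) : Prop :=
  ∃ (v0 : V) (s : List (Finset V × V)), s ≠ [] ∧ WalkIncidence v0 s ∧
    (↑(s.map Prod.fst) : Multiset (Finset V)) ≤ H.edges ∧
    (s.map Prod.snd).getLastD v0 = v0 ∧
    (v0 :: (s.map Prod.snd).dropLast).Nodup

/-- `u` is reachable from `v` in `H` by a Berge-walk. -/
def Reach (H : HGraph V) (v u : V) : Prop :=
  ∃ s : List (Finset V × V), (∀ p ∈ s, p.1 ∈ H.edges) ∧ WalkIncidence v s ∧
    (s.map Prod.snd).getLastD v = u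

/-- Hypergraph isomorphism (possibly across different vertex types). -/
def HIso {V₁ V₂ : Type*} [DecidableEq V₂] (H1 : HGraph V₁) (H2 : HGraph V₂) : Prop :=
  ∃ f : V₁ → V₂, Set.BijOn f ↑H1.verts ↑H2.verts ∧
    H2.edges = H1.edges.map (Finset.image f)

/-- The multiset of induced sub-hypergraphs of `H` on `t` vertices. -/
noncomputable def inducedMultiset (H : HGraph V) (t : ℕ) : Multiset (HGraph V) :=
  (H.verts.powersetCard t).val.map fun S => H.induce S

end Basic

section Walks

variable [LinearOrder V]

/-- The conflict set `C_i = {v_{i-1}} ∪ {u ∈ V(eᵢ) \ {v_{i-1}, vᵢ} : u ≺ vᵢ}`. -/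
def conflictSet (prev cur : V) (e : Finset V) : Finset V :=
  insert prev (((e.erase prev).erase cur).filter fun u => u < cur)

/-- `s` is a conflict-free walk of `H` starting at `v`: a Berge-path each of whose
edges avoids all previous conflict sets. -/
def IsCFWalk (H : HGraph V) (v : V) (s : List (Finset V × V)) : Prop :=
  (v :: s.map Prod.snd).Nodup ∧ (s.map Prod.fst).Nodup ∧
  (∀ p ∈ s, p.1 ∈ H.edges) ∧ WalkIncidence v s ∧
  ∀ i < s.length, ∀ j < i,
    Disjoint (s.getD i (∅, v)).1
      (conflictSet ((v :: s.map Prod.snd).getD j v) ((s.getD j (∅, v)).2)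
        ((s.getD j (∅, v)).1))

/-- Vertices of the `k`-walk-tree `T(H, v)`: conflict-free walks starting at `v`. -/
def WalkTreeVert (H : HGraph V) (v : V) : Type u :=
  {s : List (Finset V × V) // IsCFWalk H v s}

/-- The root: the one-vertex walk `(v)`. -/
def rootWalk (H : HGraph V) (v : V) : WalkTreeVert H v :=
  ⟨[], by refine ⟨by simp, by simp, by simp, ?_, ?_⟩ <;> intro i hi <;> simp at hi⟩

/-- `π`: the terminal vertex of a conflict-free walk. -/
def piEnd {H : HGraph V} {v : V} (W : WalkTreeVert H v) : V :=
  (W.1.map Prod.snd).getLastD v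

/-- `S` is the hyperedge of the walk-tree `T(H, v)` formed from the walk `W0` and
a hyperedge `e` of `H`: it consists of `W0` together with its `k-1` one-step
extensions along `e`. -/
def IsTreeEdgeFrom (H : HGraph V) (v : V) (e : Finset V)
    (W0 : WalkTreeVert H v) (S : Set (WalkTreeVert H v)) : Prop :=
  e ∈ H.edges ∧ piEnd W0 ∈ e ∧
  (∀ u ∈ e, u ≠ piEnd W0 → IsCFWalk H v (W0.1 ++ [(e, u)])) ∧
  S = {W0} ∪ {W | ∃ u ∈ e, u ≠ piEnd W0 ∧ W.1 = W0.1 ++ [(e, u)]}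

/-- `b` is the cyclic successor of `a` in the linearly ordered finite set `e`. -/
def cyclicSucc (e : Finset V) (a b : V) : Prop :=
  a ∈ e ∧ b ∈ e ∧
    ((a < b ∧ ∀ c ∈ e, a < c → b ≤ c) ∨ ((∀ c ∈ e, c ≤ a) ∧ ∀ c ∈ e, b ≤ c))

/-- Arcs of the digraph `D(H, v)`: each hyperedge of the walk-tree, ordered by the
linear order of `V(H)` via `π`, is replaced by a directed `k`-cycle. -/
def WalkArc (H : HGraph V) (v : V) (W W' : WalkTreeVert H v) : Prop :=
  ∃ e W0 S, IsTreeEdgeFrom H v e W0 S ∧ W ∈ S ∧ W' ∈ S ∧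
    cyclicSucc e (piEnd W) (piEnd W')

/-- A closed walk of length `ℓ` in `D(H, v)` starting (and ending) at the root `(v)`. -/
def IsClosedWalkFromRoot (H : HGraph V) (v : V) {ℓ : ℕ}
    (w : Fin (ℓ + 1) → WalkTreeVert H v) : Prop :=
  w 0 = rootWalk H v ∧ w (Fin.last ℓ) = rootWalk H v ∧
    ∀ i : Fin ℓ, WalkArc H v (w i.castSucc) (w i.succ)

/-- `d_H(v, ℓ, m)`: the number of closed walks of length `ℓ` in `D(H, v)` starting
at the root whose trajectory visits exactly `m` distinct vertices of `H`. -/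
noncomputable def closedWalkCount (H : HGraph V) (v : V) (ℓ m : ℕ) : ℕ :=
  Nat.card {w : Fin (ℓ + 1) → WalkTreeVert H v //
    IsClosedWalkFromRoot H v w ∧
    (Finset.univ.image fun i => piEnd (w i)).card = m}

end Walks

end HGraph

/-! ### The aligned and misaligned teeth hypergraphs -/

/-- Vertex type for the teeth constructions: `u`-vertices, `c`-vertices, `b`-vertices. -/
abbrev TeethV : Type := ℕ ⊕ ((ℕ × ℕ) ⊕ ℕ)

def uu (i : ℕ) : TeethV := Sum.inl i
def cc (i : ℕ) (j : ℕ) : TeethV := Sum.inr (Sum.inl (i, j))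
def bb (i : ℕ) : TeethV := Sum.inr (Sum.inr i)

/-- The row of centre vertices `c_i^1, …, c_i^{k-2}`. -/
def crow (k i : ℕ) : Finset TeethV := (Finset.range (k - 2)).image (cc i)

/-- The aligned-(k,ℓ)-teeth `AT(k, ℓ)`. -/
def ATeeth (k ℓ : ℕ) : HGraph TeethV where
  verts :=
    ((Finset.range (ℓ + 2)).image uu) ∪
      (((Finset.range (ℓ + 1)) ×ˢ (Finset.range (k - 2))).image fun p => cc p.1 p.2) ∪
      ((Finset.Icc 1 ℓ).image bb)
  edges :=
    ((Finset.range (ℓ + 1)).val.map fun i =>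
      insert (uu i) (insert (uu (i + 1)) (crow k i))) +
    ((Finset.Icc 1 (ℓ - 1)).val.map fun j =>
      insert (bb j) (insert (bb (j + 1)) (crow k j)))

/-- The misaligned-(k,ℓ)-teeth `MT(k, ℓ)`. -/
def MTeeth (k ℓ : ℕ) : HGraph TeethV where
  verts :=
    ((Finset.range (ℓ + 1)).image uu) ∪
      (((Finset.range (ℓ + 1)) ×ˢ (Finset.range (k - 2))).image fun p => cc p.1 p.2) ∪
      ((Finset.Icc 1 (ℓ + 1)).image bb)
  edges :=
    ((Finset.range ℓ).val.map fun i =>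
      insert (uu i) (insert (uu (i + 1)) (crow k i))) +
    ((Finset.Icc 1 ℓ).val.map fun j =>
      insert (bb j) (insert (bb (j + 1)) (crow k j)))

/-! ### Auxiliary lemmas for the closed-walk support bound -/

section ClosedWalkAux

open HGraph

variable {V : Type*} [LinearOrder V] {H : HGraph V} {v : V}

lemma mem_treeEdge {e : Finset V} {W0 : WalkTreeVert H v} {S : Set (WalkTreeVert H v)}
    (hS : IsTreeEdgeFrom H v e W0 S) {W : WalkTreeVert H v} (hW : W ∈ S) :
    W = W0 ∨ ∃ u ∈ e, u ≠ piEnd W0 ∧ W.1 = W0.1 ++ [(e, u)] := by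
  rw [hS.2.2.2] at hW
  rcases hW with h | h
  · exact Or.inl h
  · obtain ⟨u, hu, hne, hl⟩ := h
    exact Or.inr ⟨u, hu, hne, hl⟩

lemma base_prefix {e : Finset V} {W0 : WalkTreeVert H v} {S : Set (WalkTreeVert H v)}
    (hS : IsTreeEdgeFrom H v e W0 S) {W : WalkTreeVert H v} (hW : W ∈ S) :
    W0.1 <+: W.1 := by
  rcases mem_treeEdge hS hW with rfl | ⟨u, hu, hne, hl⟩
  · exact List.prefix_refl _
  · rw [hl]; exact List.prefix_append _ _

lemma tree_entry {e : Finset V} {W0 : WalkTreeVert H v} {S : Set (WalkTreeVert H v)}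
    (hS : IsTreeEdgeFrom H v e W0 S) {A B P : WalkTreeVert H v}
    (hA : A ∈ S) (hB : B ∈ S) (hPB : P.1 <+: B.1) (hPA : ¬ P.1 <+: A.1) : P = B := by
  rcases mem_treeEdge hS hB with rfl | ⟨u, hu, hne, hl⟩
  · exact absurd (hPB.trans (base_prefix hS hA)) hPA
  · rw [hl] at hPB
    rcases List.prefix_concat_iff.mp hPB with h | h
    · exact Subtype.ext (h.trans hl.symm)
    · exact absurd (h.trans (base_prefix hS hA)) hPA

lemma tree_exit {e : Finset V} {W0 : WalkTreeVert H v} {S : Set (WalkTreeVert H v)}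
    (hS : IsTreeEdgeFrom H v e W0 S) {A B P : WalkTreeVert H v}
    (hA : A ∈ S) (hB : B ∈ S) (hPA : P.1 <+: A.1) (hPB : ¬ P.1 <+: B.1) :
    P = A ∧ ∃ u, A.1 = W0.1 ++ [(e, u)] := by
  rcases mem_treeEdge hS hA with rfl | ⟨u, hu, hne, hl⟩
  · exact absurd (hPA.trans (base_prefix hS hB)) hPB
  · rw [hl] at hPA
    rcases List.prefix_concat_iff.mp hPA with h | h
    · exact ⟨Subtype.ext (h.trans hl.symm), u, hl⟩
    · exact absurd (h.trans (base_prefix hS hB)) hPB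

end ClosedWalkAux

/-- a closed walk of length `ℓ` starting at the root of `D(H, v)`
visits at most `⌊(k−1)ℓ/k⌋ + 1` distinct vertices of `H`. -/
theorem closed_walk_support_bound {V : Type*} [LinearOrder V]
    (k : ℕ) (hk : 2 ≤ k) (H : HGraph V) (hunif : H.IsUniform k)
    (v : V) (ℓ : ℕ) (w : Fin (ℓ + 1) → HGraph.WalkTreeVert H v)
    (hw : HGraph.IsClosedWalkFromRoot H v w) :
    (Finset.univ.image fun i => HGraph.piEnd (w i)).card ≤ (k - 1) * ℓ / k + 1 := by
  classical
  open HGraph in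
  obtain ⟨hw0, hwlast, harc⟩ := hw
  -- choose a witness (edge, base) for each step
  have hch : ∀ i : Fin ℓ, ∃ p : Finset V × HGraph.WalkTreeVert H v,
      ∃ S, HGraph.IsTreeEdgeFrom H v p.1 p.2 S ∧ w i.castSucc ∈ S ∧ w i.succ ∈ S ∧
        HGraph.cyclicSucc p.1 (HGraph.piEnd (w i.castSucc))
          (HGraph.piEnd (w i.succ)) := by
    intro i
    obtain ⟨e, W0, S, h1, h2, h3, h4⟩ := harc i
    exact ⟨(e, W0), S, h1, h2, h3, h4⟩
  set key : Fin ℓ → Finset V × HGraph.WalkTreeVert H v := fun i => (hch i).choose with hkeydef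
  have hkeyspec : ∀ i : Fin ℓ, ∃ S, HGraph.IsTreeEdgeFrom H v (key i).1 (key i).2 S ∧
      w i.castSucc ∈ S ∧ w i.succ ∈ S ∧
      HGraph.cyclicSucc (key i).1 (HGraph.piEnd (w i.castSucc))
        (HGraph.piEnd (w i.succ)) := fun i => (hch i).choose_spec
  -- "new" steps: the head's terminal vertex has not been seen before
  set NP : Fin ℓ → Prop := fun i => HGraph.piEnd (w i.succ) ∉
      (Finset.Iic i.castSucc).image (fun t => HGraph.piEnd (w t)) with hNPdef
  -- the base of the witness tree edge of step i is visited no later than the tail of step i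
  have hbase : ∀ i : Fin ℓ, ∃ t : Fin (ℓ + 1), t ≤ i.castSucc ∧ w t = (key i).2 := by
    intro i
    obtain ⟨S, hS, htl, hhd, hcs⟩ := hkeyspec i
    have hpref : (key i).2.1 <+: (w i.castSucc).1 := base_prefix hS htl
    set T : Finset (Fin (ℓ + 1)) :=
      (Finset.Iic i.castSucc).filter (fun t => (key i).2.1 <+: (w t).1) with hTdef
    have hTne : T.Nonempty := ⟨i.castSucc, by simp [hTdef, hpref]⟩
    set j := T.min' hTne with hjdef
    have hjT : j ∈ T := T.min'_mem hTne
    have hjle : j ≤ i.castSucc := Finset.mem_Iic.mp (Finset.mem_filter.mp hjT).1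
    have hjpref : (key i).2.1 <+: (w j).1 := (Finset.mem_filter.mp hjT).2
    by_cases hj0 : j = 0
    · refine ⟨j, hjle, Subtype.ext ?_⟩
      have hnil : (w j).1 = [] := by rw [hj0, hw0]; rfl
      rw [hnil] at hjpref
      rw [hnil, List.prefix_nil.mp hjpref]
    · obtain ⟨j', hj'⟩ := Fin.eq_succ_of_ne_zero hj0
      have hjclt : j'.castSucc < j := hj' ▸ Fin.castSucc_lt_succ (i := j')
      have hnot : ¬ (key i).2.1 <+: (w j'.castSucc).1 := by
        intro hcon
        have hmem : j'.castSucc ∈ T := Finset.mem_filter.mpr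
          ⟨Finset.mem_Iic.mpr (le_trans hjclt.le hjle), hcon⟩
        exact absurd (T.min'_le _ hmem) (not_le.mpr hjclt)
      obtain ⟨e', W0', S', h1, h2, h3, h4⟩ := harc j'
      have hentry : (key i).2 = w j'.succ :=
        tree_entry h1 h2 h3 (hj' ▸ hjpref) hnot
      exact ⟨j'.succ, hj' ▸ hjle, hentry.symm⟩
  -- a new step goes to a vertex of the witness edge other than the base's endpoint
  have hnew_mem : ∀ i : Fin ℓ, NP i →
      HGraph.piEnd (w i.succ) ∈ (key i).1.erase (HGraph.piEnd (key i).2) := by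
    intro i hni
    obtain ⟨S, hS, htl, hhd, hcs⟩ := hkeyspec i
    obtain ⟨t, ht, hwt⟩ := hbase i
    refine Finset.mem_erase.mpr ⟨?_, hcs.2.1⟩
    intro hEq
    exact hni (Finset.mem_image.mpr ⟨t, Finset.mem_Iic.mpr ht, by rw [hwt, ← hEq]⟩)
  set F : Finset V × HGraph.WalkTreeVert H v → Finset (Fin ℓ) :=
    fun κ => Finset.univ.filter (fun i => key i = κ) with hFdef
  -- the last step in each fiber is not new
  have hmax_notnew : ∀ κ, ∀ hne : (F κ).Nonempty, ¬ NP ((F κ).max' hne) := by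
    intro κ hne hN
    set i := (F κ).max' hne with hidef
    have hiF : i ∈ F κ := (F κ).max'_mem hne
    have hκ : key i = κ := (Finset.mem_filter.mp hiF).2
    obtain ⟨S, hS, htl, hhd, hcs⟩ := hkeyspec i
    by_cases hhd0 : w i.succ = (key i).2
    · obtain ⟨t, ht, hwt⟩ := hbase i
      exact hN (Finset.mem_image.mpr ⟨t, Finset.mem_Iic.mpr ht, by rw [hwt, hhd0]⟩)
    · rcases mem_treeEdge hS hhd with h | ⟨u, hu, hneu, hl⟩
      · exact hhd0 h
      set T' : Finset (Fin (ℓ + 1)) :=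
        Finset.univ.filter (fun t => (w i.succ).1 <+: (w t).1) with hT'def
      have hT'ne : T'.Nonempty :=
        ⟨i.succ, Finset.mem_filter.mpr ⟨Finset.mem_univ _, List.prefix_refl _⟩⟩
      set ts := T'.max' hT'ne with htsdef
      have htsT : ts ∈ T' := T'.max'_mem hT'ne
      have htspref : (w i.succ).1 <+: (w ts).1 := (Finset.mem_filter.mp htsT).2
      have hge : i.succ ≤ ts := T'.le_max' _
        (Finset.mem_filter.mpr ⟨Finset.mem_univ _, List.prefix_refl _⟩)
      have hlast : ts ≠ Fin.last ℓ := by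
        intro hcon
        rw [hcon, hwlast] at htspref
        have : (w i.succ).1 = [] := List.prefix_nil.mp htspref
        rw [hl] at this
        simp at this
      have hlt : ts.val < ℓ := by
        have := Fin.le_last ts
        have hne' : ts.val ≠ ℓ := fun h => hlast (Fin.ext h)
        omega
      set j : Fin ℓ := ⟨ts.val, hlt⟩ with hjdef2
      have hjc : j.castSucc = ts := Fin.ext rfl
      have hA : (w i.succ).1 <+: (w j.castSucc).1 := by rw [hjc]; exact htspref
      have hB : ¬ (w i.succ).1 <+: (w j.succ).1 := by
        intro hcon
        have hmem : j.succ ∈ T' := Finset.mem_filter.mpr ⟨Finset.mem_univ _, hcon⟩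
        have hle := T'.le_max' _ hmem
        rw [← htsdef, ← hjc] at hle
        exact absurd hle (not_le.mpr (Fin.castSucc_lt_succ (i := j)))
      obtain ⟨S', hS', htl', hhd', hcs'⟩ := hkeyspec j
      obtain ⟨hPA, u', hl'⟩ := tree_exit hS' htl' hhd' hA hB
      have hAeq : (w i.succ).1 = (w j.castSucc).1 := congrArg Subtype.val hPA
      have heq : (key i).2.1 ++ [((key i).1, u)] = (key j).2.1 ++ [((key j).1, u')] := by
        rw [← hl, hAeq, hl']
      have hlen : (key i).2.1.length = (key j).2.1.length := by
        have := congrArg List.length heq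
        simpa using this
      obtain ⟨hpre, hsing⟩ := List.append_inj heq hlen
      have hfst : (key i).1 = (key j).1 := by
        have : ((key i).1, u) = ((key j).1, u') := by simpa using hsing
        exact (Prod.ext_iff.mp this).1
      have hkj : key j = key i :=
        Prod.ext (hfst.symm) (Subtype.ext hpre.symm)
      have hjF : j ∈ F κ := Finset.mem_filter.mpr ⟨Finset.mem_univ _, hkj.trans hκ⟩
      have hji : j ≤ i := (F κ).le_max' j hjF
      have hij : i < j := by
        have h1 : i.val + 1 ≤ ts.val := hge
        have h2 : j.val = ts.val := rfl
        exact Fin.lt_def.mpr (by omega)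
      exact absurd hji (not_le.mpr hij)
  set NS : Finset (Fin ℓ) := Finset.univ.filter NP with hNSdef
  set K : Finset (Finset V × HGraph.WalkTreeVert H v) := Finset.univ.image key with hKdef
  -- fiber lower bound: each used tree edge has a non-new step
  have hfib1 : ∀ κ ∈ K, (NS.filter (fun i => key i = κ)).card + 1 ≤ (F κ).card := by
    intro κ hκ
    obtain ⟨i₀, -, hi₀⟩ := Finset.mem_image.mp hκ
    have hne : (F κ).Nonempty := ⟨i₀, Finset.mem_filter.mpr ⟨Finset.mem_univ _, hi₀⟩⟩
    have hsub : NS.filter (fun i => key i = κ) ⊆ (F κ).erase ((F κ).max' hne) := by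
      intro i hi
      have h1 := Finset.mem_filter.mp hi
      have h2 := Finset.mem_filter.mp h1.1
      refine Finset.mem_erase.mpr ⟨?_, Finset.mem_filter.mpr ⟨Finset.mem_univ _, h1.2⟩⟩
      intro hcon
      exact hmax_notnew κ hne (hcon ▸ h2.2)
    have hc1 := Finset.card_le_card hsub
    rw [Finset.card_erase_of_mem ((F κ).max'_mem hne)] at hc1
    have hpos : 0 < (F κ).card := Finset.card_pos.mpr hne
    omega
  -- fiber upper bound: at most k-1 new steps per tree edge
  have hfib2 : ∀ κ ∈ K, (NS.filter (fun i => key i = κ)).card ≤ k - 1 := by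
    intro κ hκ
    obtain ⟨i₀, -, hi₀⟩ := Finset.mem_image.mp hκ
    obtain ⟨S, hS, -, -, -⟩ := hkeyspec i₀
    rw [hi₀] at hS
    have hcard : (κ.1.erase (HGraph.piEnd κ.2)).card = k - 1 := by
      rw [Finset.card_erase_of_mem hS.2.1, hunif κ.1 hS.1]
    rw [← hcard]
    apply Finset.card_le_card_of_injOn (fun i => HGraph.piEnd (w i.succ))
    · intro i hi
      have h1 := Finset.mem_filter.mp hi
      have h2 := Finset.mem_filter.mp h1.1
      have := hnew_mem i h2.2
      rw [h1.2] at this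
      exact this
    · intro a ha b hb hab
      simp only [Finset.coe_filter, Set.mem_setOf_eq] at ha hb
      have hNa : NP a := (Finset.mem_filter.mp ha.1).2
      have hNb : NP b := (Finset.mem_filter.mp hb.1).2
      rcases lt_trichotomy a b with h | h | h
      · exfalso
        apply hNb
        refine Finset.mem_image.mpr ⟨a.succ, Finset.mem_Iic.mpr ?_, hab⟩
        have : a.val + 1 ≤ b.val := h
        exact Fin.le_def.mpr (by simpa using this)
      · exact h
      · exfalso
        apply hNa
        refine Finset.mem_image.mpr ⟨b.succ, Finset.mem_Iic.mpr ?_, hab.symm⟩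
        have : b.val + 1 ≤ a.val := h
        exact Fin.le_def.mpr (by simpa using this)
  -- sum the fibers
  have hcard1 : ∑ κ ∈ K, (F κ).card = ℓ := by
    have := Finset.card_eq_sum_card_fiberwise
      (fun (i : Fin ℓ) (_ : i ∈ Finset.univ) => Finset.mem_image_of_mem key (Finset.mem_univ i))
    rw [Finset.card_univ, Fintype.card_fin] at this
    exact this.symm
  have hcard2 : ∑ κ ∈ K, (NS.filter (fun i => key i = κ)).card = NS.card := by
    exact (Finset.card_eq_sum_card_fiberwise
      (fun i _ => Finset.mem_image_of_mem key (Finset.mem_univ i))).symm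
  have hsum1 : NS.card + K.card ≤ ℓ := by
    calc NS.card + K.card
        = ∑ κ ∈ K, (NS.filter (fun i => key i = κ)).card + ∑ _κ ∈ K, 1 := by
          rw [hcard2]; simp
      _ = ∑ κ ∈ K, ((NS.filter (fun i => key i = κ)).card + 1) := by
          rw [Finset.sum_add_distrib]
      _ ≤ ∑ κ ∈ K, (F κ).card := Finset.sum_le_sum hfib1
      _ = ℓ := hcard1
  have hsum2 : NS.card ≤ (k - 1) * K.card := by
    calc NS.card = ∑ κ ∈ K, (NS.filter (fun i => key i = κ)).card := hcard2.symm
      _ ≤ ∑ _κ ∈ K, (k - 1) := Finset.sum_le_sum hfib2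
      _ = (k - 1) * K.card := by rw [Finset.sum_const, smul_eq_mul, mul_comm]
  have hmain : NS.card * k ≤ (k - 1) * ℓ := by
    obtain ⟨k', rfl⟩ : ∃ k', k = k' + 1 := ⟨k - 1, by omega⟩
    simp only [Nat.add_sub_cancel] at hsum2 ⊢
    calc NS.card * (k' + 1) = NS.card * k' + NS.card := Nat.mul_succ _ _
      _ ≤ NS.card * k' + k' * K.card := by omega
      _ = k' * (NS.card + K.card) := by ring
      _ ≤ k' * ℓ := Nat.mul_le_mul_left _ hsum1
  have hNSle : NS.card ≤ (k - 1) * ℓ / k :=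
    (Nat.le_div_iff_mul_le (by omega : 0 < k)).mpr hmain
  -- every visited vertex is v or the head of a new step
  have hXsub : (Finset.univ.image fun i => HGraph.piEnd (w i)) ⊆
      insert v (NS.image fun i => HGraph.piEnd (w i.succ)) := by
    intro x hx
    obtain ⟨t₀, -, ht₀⟩ := Finset.mem_image.mp hx
    set T : Finset (Fin (ℓ + 1)) :=
      Finset.univ.filter (fun t => HGraph.piEnd (w t) = x) with hTdef
    have hTne : T.Nonempty := ⟨t₀, Finset.mem_filter.mpr ⟨Finset.mem_univ _, ht₀⟩⟩
    set t := T.min' hTne with htdef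
    have htT : t ∈ T := T.min'_mem hTne
    have htx : HGraph.piEnd (w t) = x := (Finset.mem_filter.mp htT).2
    by_cases ht0 : t = 0
    · have hroot : HGraph.piEnd (w (0 : Fin (ℓ + 1))) = v := by
        rw [hw0]; rfl
      rw [ht0, hroot] at htx
      exact Finset.mem_insert.mpr (Or.inl htx.symm)
    · obtain ⟨j, hj⟩ := Fin.eq_succ_of_ne_zero ht0
      have hNPj : NP j := by
        intro hcon
        obtain ⟨t', ht', hpe⟩ := Finset.mem_image.mp hcon
        have ht'le : t' ≤ j.castSucc := Finset.mem_Iic.mp ht'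
        have ht'T : t' ∈ T := Finset.mem_filter.mpr
          ⟨Finset.mem_univ _, by rw [hpe, ← hj, htx]⟩
        have := T.min'_le _ ht'T
        rw [← htdef, hj] at this
        have h1 : j.val + 1 ≤ t'.val := this
        have h2 : t'.val ≤ j.val := ht'le
        omega
      refine Finset.mem_insert.mpr (Or.inr (Finset.mem_image.mpr
        ⟨j, Finset.mem_filter.mpr ⟨Finset.mem_univ _, hNPj⟩, ?_⟩))
      rw [← hj, htx]
  calc (Finset.univ.image fun i => HGraph.piEnd (w i)).card
      ≤ (insert v (NS.image fun i => HGraph.piEnd (w i.succ))).card :=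
        Finset.card_le_card hXsub
    _ ≤ (NS.image fun i => HGraph.piEnd (w i.succ)).card + 1 := Finset.card_insert_le _ _
    _ ≤ NS.card + 1 := by
        have := Finset.card_image_le (s := NS) (f := fun i => HGraph.piEnd (w i.succ))
        omega
    _ ≤ (k - 1) * ℓ / k + 1 := by omega
end

section
/- For every k ≥ 2 and even ℓ ≥ 0, the aligned-(k,ℓ)-teeth hypergraph AT(k, ℓ) has a perfect matching, while the misaligned-(k,ℓ)-teeth MT(k, ℓ) has no perfect matching; for odd ℓ, MT(k, ℓ) has a perfect matching while AT(k, ℓ) does not. Consequently m_k(AT(k, ℓ), x) ≠ m_k(MT(k, ℓ), x) for all k ≥ 2 and ℓ ≥ 0. -/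
open Polynomial

universe u

namespace Teeth
open Finset

def eE (m i : ℕ) : Finset TeethV := insert (uu i) (insert (uu (i+1)) (crow (m+2) i))
def fE (m j : ℕ) : Finset TeethV := insert (bb j) (insert (bb (j+1)) (crow (m+2) j))

lemma mem_crow' {m i : ℕ} {v : TeethV} : v ∈ crow (m+2) i ↔ ∃ j < m, v = cc i j := by
  simp [crow, cc, eq_comm]

lemma mem_eE {m i : ℕ} {v : TeethV} :
    v ∈ eE m i ↔ v = uu i ∨ v = uu (i+1) ∨ ∃ j < m, v = cc i j := by
  simp [eE, mem_crow']

lemma mem_fE {m j : ℕ} {v : TeethV} :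
    v ∈ fE m j ↔ v = bb j ∨ v = bb (j+1) ∨ ∃ j' < m, v = cc j j' := by
  simp [fE, mem_crow']

lemma disj_eE_eE {m i i' : ℕ} (h : i + 2 ≤ i') : Disjoint (eE m i) (eE m i') := by
  simp only [Finset.disjoint_left, mem_eE]
  rintro v (rfl|rfl|⟨j,hj,rfl⟩) <;> simp [uu, cc, bb] <;> omega

lemma disj_fE_fE {m j j' : ℕ} (h : j + 2 ≤ j') : Disjoint (fE m j) (fE m j') := by
  simp only [Finset.disjoint_left, mem_fE]
  rintro v (rfl|rfl|⟨j,hj,rfl⟩) <;> simp [uu, cc, bb] <;> omega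

lemma disj_eE_fE {m i j : ℕ} (h : i ≠ j) : Disjoint (eE m i) (fE m j) := by
  simp only [Finset.disjoint_left, mem_eE, mem_fE]
  rintro v (rfl|rfl|⟨j,hj,rfl⟩) <;> simp [uu, cc, bb] <;> omega

lemma card_crow (m i : ℕ) : (crow (m+2) i).card = m := by
  rw [crow, Finset.card_image_of_injective _ (fun a b h => by simpa [cc] using h)]
  simp

lemma card_eE (m i : ℕ) : (eE m i).card = m + 2 := by
  rw [eE, Finset.card_insert_of_notMem, Finset.card_insert_of_notMem, card_crow]
  · simp [mem_crow', uu, cc]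
  · simp [mem_crow', uu, cc]

lemma card_fE (m j : ℕ) : (fE m j).card = m + 2 := by
  rw [fE, Finset.card_insert_of_notMem, Finset.card_insert_of_notMem, card_crow]
  · simp [mem_crow', uu, cc, bb]
  · simp [mem_crow', uu, cc, bb]

end Teeth
namespace Teeth
open Finset

lemma AT_edges (m ℓ : ℕ) : (ATeeth (m+2) ℓ).edges =
    (Finset.range (ℓ+1)).val.map (eE m) + (Finset.Icc 1 (ℓ-1)).val.map (fE m) := rfl

lemma MT_edges (m ℓ : ℕ) : (MTeeth (m+2) ℓ).edges =
    (Finset.range ℓ).val.map (eE m) + (Finset.Icc 1 ℓ).val.map (fE m) := rfl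

lemma AT_edge_mem {m ℓ : ℕ} {e : Finset TeethV} (he : e ∈ (ATeeth (m+2) ℓ).edges) :
    (∃ i ≤ ℓ, e = eE m i) ∨ (∃ j, 1 ≤ j ∧ j ≤ ℓ-1 ∧ e = fE m j) := by
  rw [AT_edges, Multiset.mem_add] at he
  rcases he with he | he <;> simp only [Multiset.mem_map, Finset.mem_val,
    Finset.mem_range, Finset.mem_Icc] at he
  · obtain ⟨i, hi, rfl⟩ := he; exact Or.inl ⟨i, by omega, rfl⟩
  · obtain ⟨j, hj, rfl⟩ := he; exact Or.inr ⟨j, hj.1, hj.2, rfl⟩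

lemma MT_edge_mem {m ℓ : ℕ} {e : Finset TeethV} (he : e ∈ (MTeeth (m+2) ℓ).edges) :
    (∃ i < ℓ, e = eE m i) ∨ (∃ j, 1 ≤ j ∧ j ≤ ℓ ∧ e = fE m j) := by
  rw [MT_edges, Multiset.mem_add] at he
  rcases he with he | he <;> simp only [Multiset.mem_map, Finset.mem_val,
    Finset.mem_range, Finset.mem_Icc] at he
  · obtain ⟨i, hi, rfl⟩ := he; exact Or.inl ⟨i, by omega, rfl⟩
  · obtain ⟨j, hj, rfl⟩ := he; exact Or.inr ⟨j, hj.1, hj.2, rfl⟩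

lemma mem_AT_verts {m ℓ : ℕ} {v : TeethV} : v ∈ (ATeeth (m+2) ℓ).verts ↔
    (∃ i < ℓ+2, v = uu i) ∨ (∃ i < ℓ+1, ∃ j < m, v = cc i j) ∨
      (∃ i, 1 ≤ i ∧ i ≤ ℓ ∧ v = bb i) := by
  simp [ATeeth, uu, cc, bb, eq_comm, and_assoc]

lemma mem_MT_verts {m ℓ : ℕ} {v : TeethV} : v ∈ (MTeeth (m+2) ℓ).verts ↔
    (∃ i < ℓ+1, v = uu i) ∨ (∃ i < ℓ+1, ∃ j < m, v = cc i j) ∨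
      (∃ i, 1 ≤ i ∧ i ≤ ℓ+1 ∧ v = bb i) := by
  simp [MTeeth, uu, cc, bb, eq_comm, and_assoc]

lemma eE_subset_AT {m ℓ i : ℕ} (hi : i ≤ ℓ) : eE m i ⊆ (ATeeth (m+2) ℓ).verts := by
  intro v hv
  rw [mem_eE] at hv; rw [mem_AT_verts]
  rcases hv with rfl | rfl | ⟨j, hj, rfl⟩
  · exact Or.inl ⟨i, by omega, rfl⟩
  · exact Or.inl ⟨i+1, by omega, rfl⟩
  · exact Or.inr (Or.inl ⟨i, by omega, j, hj, rfl⟩)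

lemma fE_subset_AT {m ℓ j : ℕ} (h1 : 1 ≤ j) (h2 : j ≤ ℓ-1) :
    fE m j ⊆ (ATeeth (m+2) ℓ).verts := by
  intro v hv
  rw [mem_fE] at hv; rw [mem_AT_verts]
  rcases hv with rfl | rfl | ⟨j', hj', rfl⟩
  · exact Or.inr (Or.inr ⟨j, h1, by omega, rfl⟩)
  · exact Or.inr (Or.inr ⟨j+1, by omega, by omega, rfl⟩)
  · exact Or.inr (Or.inl ⟨j, by omega, j', hj', rfl⟩)

lemma eE_subset_MT {m ℓ i : ℕ} (hi : i < ℓ) : eE m i ⊆ (MTeeth (m+2) ℓ).verts := by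
  intro v hv
  rw [mem_eE] at hv; rw [mem_MT_verts]
  rcases hv with rfl | rfl | ⟨j, hj, rfl⟩
  · exact Or.inl ⟨i, by omega, rfl⟩
  · exact Or.inl ⟨i+1, by omega, rfl⟩
  · exact Or.inr (Or.inl ⟨i, by omega, j, hj, rfl⟩)

lemma fE_subset_MT {m ℓ j : ℕ} (h1 : 1 ≤ j) (h2 : j ≤ ℓ) :
    fE m j ⊆ (MTeeth (m+2) ℓ).verts := by
  intro v hv
  rw [mem_fE] at hv; rw [mem_MT_verts]
  rcases hv with rfl | rfl | ⟨j', hj', rfl⟩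
  · exact Or.inr (Or.inr ⟨j, h1, by omega, rfl⟩)
  · exact Or.inr (Or.inr ⟨j+1, by omega, by omega, rfl⟩)
  · exact Or.inr (Or.inl ⟨j, by omega, j', hj', rfl⟩)

end Teeth
namespace Teeth
open Finset

lemma filter_crow (m i : ℕ) : (crow (m+2) i).filter (fun v => v.isLeft) = ∅ := by
  rw [Finset.filter_eq_empty_iff]
  simp [crow, cc]

lemma filter_eE_card (m i : ℕ) : ((eE m i).filter (fun v => v.isLeft)).card = 2 := by
  rw [eE, Finset.filter_insert, Finset.filter_insert]
  simp only [uu, Sum.isLeft_inl, if_pos, filter_crow]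
  rw [Finset.card_insert_of_notMem (by simp [uu]), Finset.card_insert_of_notMem (by simp)]
  rfl

lemma filter_fE_card (m j : ℕ) : ((fE m j).filter (fun v => v.isLeft)).card = 0 := by
  rw [fE, Finset.filter_insert, Finset.filter_insert]
  simp [bb, filter_crow]

lemma AT_filter_card (m ℓ : ℕ) :
    ((ATeeth (m+2) ℓ).verts.filter (fun v => v.isLeft)).card = ℓ + 2 := by
  have : (ATeeth (m+2) ℓ).verts.filter (fun v => v.isLeft)
      = (Finset.range (ℓ+2)).image uu := by
    ext v
    simp only [Finset.mem_filter, mem_AT_verts, Finset.mem_image, Finset.mem_range]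
    constructor
    · rintro ⟨(⟨i, hi, rfl⟩ | ⟨i, hi, j, hj, rfl⟩ | ⟨i, h1, h2, rfl⟩), hL⟩
      · exact ⟨i, hi, rfl⟩
      · simp [cc] at hL
      · simp [bb] at hL
    · rintro ⟨i, hi, rfl⟩
      exact ⟨Or.inl ⟨i, hi, rfl⟩, by simp [uu]⟩
  rw [this, Finset.card_image_of_injective _ (fun a b h => by simpa [uu] using h)]
  simp

lemma MT_filter_card (m ℓ : ℕ) :
    ((MTeeth (m+2) ℓ).verts.filter (fun v => v.isLeft)).card = ℓ + 1 := by
  have : (MTeeth (m+2) ℓ).verts.filter (fun v => v.isLeft)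
      = (Finset.range (ℓ+1)).image uu := by
    ext v
    simp only [Finset.mem_filter, mem_MT_verts, Finset.mem_image, Finset.mem_range]
    constructor
    · rintro ⟨(⟨i, hi, rfl⟩ | ⟨i, hi, j, hj, rfl⟩ | ⟨i, h1, h2, rfl⟩), hL⟩
      · exact ⟨i, hi, rfl⟩
      · simp [cc] at hL
      · simp [bb] at hL
    · rintro ⟨i, hi, rfl⟩
      exact ⟨Or.inl ⟨i, hi, rfl⟩, by simp [uu]⟩
  rw [this, Finset.card_image_of_injective _ (fun a b h => by simpa [uu] using h)]
  simp

lemma AT_verts_card (m ℓ : ℕ) : (ATeeth (m+2) ℓ).verts.card = (m+2) * (ℓ+1) := by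
  rw [ATeeth]
  rw [Finset.card_union_of_disjoint, Finset.card_union_of_disjoint]
  · rw [Finset.card_image_of_injective _ (fun a b h => by simpa [uu] using h),
      Finset.card_image_of_injective _
        (fun a b h => by simpa [cc, Prod.ext_iff] using h),
      Finset.card_image_of_injective _ (fun a b h => by simpa [bb] using h)]
    simp only [Finset.card_range, Finset.card_product, Nat.card_Icc, Nat.add_sub_cancel]
    ring
  · simp only [Finset.disjoint_left, Finset.mem_image]
    rintro v ⟨i, hi, rfl⟩ ⟨p, hp, hc⟩
    simp [uu, cc] at hc
  · simp only [Finset.disjoint_left, Finset.mem_union, Finset.mem_image]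
    rintro v (⟨i, hi, rfl⟩ | ⟨p, hp, rfl⟩) ⟨j, hj, hb⟩ <;> simp [uu, cc, bb] at hb

lemma MT_verts_card (m ℓ : ℕ) : (MTeeth (m+2) ℓ).verts.card = (m+2) * (ℓ+1) := by
  rw [MTeeth]
  rw [Finset.card_union_of_disjoint, Finset.card_union_of_disjoint]
  · rw [Finset.card_image_of_injective _ (fun a b h => by simpa [uu] using h),
      Finset.card_image_of_injective _
        (fun a b h => by simpa [cc, Prod.ext_iff] using h),
      Finset.card_image_of_injective _ (fun a b h => by simpa [bb] using h)]
    simp only [Finset.card_range, Finset.card_product, Nat.card_Icc, Nat.add_sub_cancel]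
    ring
  · simp only [Finset.disjoint_left, Finset.mem_image]
    rintro v ⟨i, hi, rfl⟩ ⟨p, hp, hc⟩
    simp [uu, cc] at hc
  · simp only [Finset.disjoint_left, Finset.mem_union, Finset.mem_image]
    rintro v (⟨i, hi, rfl⟩ | ⟨p, hp, rfl⟩) ⟨j, hj, hb⟩ <;> simp [uu, cc, bb] at hb

end Teeth
namespace Teeth
open Finset

def MA (m t : ℕ) : List (Finset TeethV) :=
  (List.range (t+1)).map (fun s => eE m (2*s)) ++ (List.range t).map (fun s => fE m (2*s+1))

def MB (m t : ℕ) : List (Finset TeethV) :=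
  (List.range (t+1)).map (fun s => eE m (2*s)) ++ (List.range (t+1)).map (fun s => fE m (2*s+1))

lemma mem_MA {m t : ℕ} {e : Finset TeethV} :
    e ∈ (↑(MA m t) : Multiset (Finset TeethV)) ↔
      (∃ s ≤ t, e = eE m (2*s)) ∨ (∃ s < t, e = fE m (2*s+1)) := by
  simp [MA, eq_comm, Nat.lt_succ_iff]

lemma mem_MB {m t : ℕ} {e : Finset TeethV} :
    e ∈ (↑(MB m t) : Multiset (Finset TeethV)) ↔
      (∃ s ≤ t, e = eE m (2*s)) ∨ (∃ s ≤ t, e = fE m (2*s+1)) := by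
  simp [MB, eq_comm, Nat.lt_succ_iff]

lemma pairwise_MA (m t : ℕ) : (MA m t).Pairwise Disjoint := by
  rw [MA, List.pairwise_append]
  refine ⟨List.pairwise_map.mpr ((List.pairwise_lt_range).imp
      fun h => disj_eE_eE (by omega)), List.pairwise_map.mpr
      ((List.pairwise_lt_range).imp fun h => disj_fE_fE (by omega)), ?_⟩
  simp only [List.mem_map, List.mem_range]
  rintro a ⟨s, hs, rfl⟩ b ⟨s', hs', rfl⟩
  exact disj_eE_fE (by omega)

lemma pairwise_MB (m t : ℕ) : (MB m t).Pairwise Disjoint := by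
  rw [MB, List.pairwise_append]
  refine ⟨List.pairwise_map.mpr ((List.pairwise_lt_range).imp
      fun h => disj_eE_eE (by omega)), List.pairwise_map.mpr
      ((List.pairwise_lt_range).imp fun h => disj_fE_fE (by omega)), ?_⟩
  simp only [List.mem_map, List.mem_range]
  rintro a ⟨s, hs, rfl⟩ b ⟨s', hs', rfl⟩
  exact disj_eE_fE (by omega)

lemma MA_le (m t : ℕ) : (↑(MA m t) : Multiset (Finset TeethV)) ≤ (ATeeth (m+2) (2*t)).edges := by
  rw [AT_edges, MA]
  rw [← Multiset.coe_add]
  refine add_le_add ?_ ?_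
  · rw [show (fun s => eE m (2*s)) = (eE m) ∘ (fun s => 2*s) from rfl, ← Multiset.map_coe, ← Multiset.map_map]
    refine Multiset.map_le_map ((Multiset.le_iff_subset
      (Multiset.Nodup.map (fun a b h => by omega)
        (Multiset.coe_nodup.mpr (List.nodup_range)))).mpr ?_)
    intro x hx
    rw [Multiset.mem_map] at hx
    obtain ⟨s, hs, rfl⟩ := hx
    simp only [Multiset.mem_coe, List.mem_range] at hs
    simp only [Finset.mem_val, Finset.mem_range]; omega
  · rw [show (fun s => fE m (2*s+1)) = (fE m) ∘ (fun s => 2*s+1) from rfl, ← Multiset.map_coe, ← Multiset.map_map]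
    refine Multiset.map_le_map ((Multiset.le_iff_subset
      (Multiset.Nodup.map (fun a b h => by omega)
        (Multiset.coe_nodup.mpr (List.nodup_range)))).mpr ?_)
    intro x hx
    rw [Multiset.mem_map] at hx
    obtain ⟨s, hs, rfl⟩ := hx
    simp only [Multiset.mem_coe, List.mem_range] at hs
    simp only [Finset.mem_val, Finset.mem_Icc]; omega

lemma MB_le (m t : ℕ) :
    (↑(MB m t) : Multiset (Finset TeethV)) ≤ (MTeeth (m+2) (2*t+1)).edges := by
  rw [MT_edges, MB]
  rw [← Multiset.coe_add]
  refine add_le_add ?_ ?_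
  · rw [show (fun s => eE m (2*s)) = (eE m) ∘ (fun s => 2*s) from rfl, ← Multiset.map_coe, ← Multiset.map_map]
    refine Multiset.map_le_map ((Multiset.le_iff_subset
      (Multiset.Nodup.map (fun a b h => by omega)
        (Multiset.coe_nodup.mpr (List.nodup_range)))).mpr ?_)
    intro x hx
    rw [Multiset.mem_map] at hx
    obtain ⟨s, hs, rfl⟩ := hx
    simp only [Multiset.mem_coe, List.mem_range] at hs
    simp only [Finset.mem_val, Finset.mem_range]; omega
  · rw [show (fun s => fE m (2*s+1)) = (fE m) ∘ (fun s => 2*s+1) from rfl, ← Multiset.map_coe, ← Multiset.map_map]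
    refine Multiset.map_le_map ((Multiset.le_iff_subset
      (Multiset.Nodup.map (fun a b h => by omega)
        (Multiset.coe_nodup.mpr (List.nodup_range)))).mpr ?_)
    intro x hx
    rw [Multiset.mem_map] at hx
    obtain ⟨s, hs, rfl⟩ := hx
    simp only [Multiset.mem_coe, List.mem_range] at hs
    simp only [Finset.mem_val, Finset.mem_Icc]; omega

lemma AT_pm (m t : ℕ) : (ATeeth (m+2) (2*t)).IsPerfectMatching ↑(MA m t) := by
  refine ⟨MA_le m t, Multiset.pairwise_coe_iff_pairwise.mpr
    (pairwise_MA m t), ?_⟩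
  intro v hv
  rw [mem_AT_verts] at hv
  rcases hv with ⟨i, hi, rfl⟩ | ⟨i, hi, j, hj, rfl⟩ | ⟨i, h1, h2, rfl⟩
  · rcases Nat.even_or_odd i with ⟨s, rfl⟩ | ⟨s, rfl⟩
    · exact ⟨eE m (2*s), mem_MA.mpr (Or.inl ⟨s, by omega, rfl⟩),
        mem_eE.mpr (Or.inl (by rw [two_mul]))⟩
    · exact ⟨eE m (2*s), mem_MA.mpr (Or.inl ⟨s, by omega, rfl⟩),
        mem_eE.mpr (Or.inr (Or.inl rfl))⟩
  · rcases Nat.even_or_odd i with ⟨s, rfl⟩ | ⟨s, rfl⟩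
    · exact ⟨eE m (2*s), mem_MA.mpr (Or.inl ⟨s, by omega, rfl⟩),
        mem_eE.mpr (Or.inr (Or.inr ⟨j, hj, by rw [two_mul]⟩))⟩
    · exact ⟨fE m (2*s+1), mem_MA.mpr (Or.inr ⟨s, by omega, rfl⟩),
        mem_fE.mpr (Or.inr (Or.inr ⟨j, hj, rfl⟩))⟩
  · rcases Nat.even_or_odd i with ⟨s, rfl⟩ | ⟨s, rfl⟩
    · refine ⟨fE m (2*(s-1)+1), mem_MA.mpr (Or.inr ⟨s-1, by omega, rfl⟩),
        mem_fE.mpr (Or.inr (Or.inl ?_))⟩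
      have : s + s = 2*(s-1)+1+1 := by omega
      rw [this]
    · exact ⟨fE m (2*s+1), mem_MA.mpr (Or.inr ⟨s, by omega, rfl⟩),
        mem_fE.mpr (Or.inl rfl)⟩

lemma MT_pm (m t : ℕ) : (MTeeth (m+2) (2*t+1)).IsPerfectMatching ↑(MB m t) := by
  refine ⟨MB_le m t, Multiset.pairwise_coe_iff_pairwise.mpr
    (pairwise_MB m t), ?_⟩
  intro v hv
  rw [mem_MT_verts] at hv
  rcases hv with ⟨i, hi, rfl⟩ | ⟨i, hi, j, hj, rfl⟩ | ⟨i, h1, h2, rfl⟩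
  · rcases Nat.even_or_odd i with ⟨s, rfl⟩ | ⟨s, rfl⟩
    · exact ⟨eE m (2*s), mem_MB.mpr (Or.inl ⟨s, by omega, rfl⟩),
        mem_eE.mpr (Or.inl (by rw [two_mul]))⟩
    · exact ⟨eE m (2*s), mem_MB.mpr (Or.inl ⟨s, by omega, rfl⟩),
        mem_eE.mpr (Or.inr (Or.inl rfl))⟩
  · rcases Nat.even_or_odd i with ⟨s, rfl⟩ | ⟨s, rfl⟩
    · exact ⟨eE m (2*s), mem_MB.mpr (Or.inl ⟨s, by omega, rfl⟩),
        mem_eE.mpr (Or.inr (Or.inr ⟨j, hj, by rw [two_mul]⟩))⟩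
    · exact ⟨fE m (2*s+1), mem_MB.mpr (Or.inr ⟨s, by omega, rfl⟩),
        mem_fE.mpr (Or.inr (Or.inr ⟨j, hj, rfl⟩))⟩
  · rcases Nat.even_or_odd i with ⟨s, rfl⟩ | ⟨s, rfl⟩
    · refine ⟨fE m (2*(s-1)+1), mem_MB.mpr (Or.inr ⟨s-1, by omega, rfl⟩),
        mem_fE.mpr (Or.inr (Or.inl ?_))⟩
      have : s + s = 2*(s-1)+1+1 := by omega
      rw [this]
    · exact ⟨fE m (2*s+1), mem_MB.mpr (Or.inr ⟨s, by omega, rfl⟩),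
        mem_fE.mpr (Or.inl rfl)⟩

end Teeth
namespace Teeth
open Finset

lemma nodup_of_pairwise {M : Multiset (Finset TeethV)} (hne : ∀ e ∈ M, e.Nonempty)
    (hpw : M.Pairwise Disjoint) : M.Nodup := by
  obtain ⟨l, rfl, hl⟩ := hpw
  rw [Multiset.coe_nodup]
  exact (hl.imp_of_mem fun {a b} ha hb hd => fun h => by
    obtain ⟨x, hx⟩ := hne a (by simpa using ha)
    exact (Finset.disjoint_left.mp hd hx (h ▸ hx)))

lemma pairwise_forall {M : Multiset (Finset TeethV)} (hpw : M.Pairwise Disjoint) :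
    ∀ a ∈ M, ∀ b ∈ M, a ≠ b → Disjoint a b :=
  fun _ ha _ hb hab => hpw.forall ha hb hab

/-- If disjoint nonempty edges cover the vertex set, the union of the
distinct edges, as a finset biUnion, is the vertex set. -/
lemma biUnion_eq {H : HGraph TeethV} {M : Multiset (Finset TeethV)}
    (hsub : ∀ e ∈ M, e ⊆ H.verts) (hcov : ∀ v ∈ H.verts, ∃ e ∈ M, v ∈ e) :
    M.toFinset.biUnion id = H.verts := by
  ext v
  simp only [Finset.mem_biUnion, Multiset.mem_toFinset, id]
  exact ⟨fun ⟨e, he, hv⟩ => hsub e he hv, fun hv => hcov v hv⟩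

lemma card_biUnion_eq {M : Multiset (Finset TeethV)} (hpw : M.Pairwise Disjoint) :
    (M.toFinset.biUnion id).card = ∑ e ∈ M.toFinset, e.card := by
  refine Finset.card_biUnion ?_
  intro x hx y hy hxy
  exact pairwise_forall hpw x (Multiset.mem_toFinset.mp hx) y (Multiset.mem_toFinset.mp hy) hxy

/-- Parity obstruction to perfect matchings. -/
lemma no_pm_of_odd {H : HGraph TeethV}
    (hedge : ∀ e ∈ H.edges, e ⊆ H.verts ∧ e.Nonempty ∧
      Even ((e.filter (fun v => v.isLeft)).card))
    (hodd : ¬ Even ((H.verts.filter (fun v => v.isLeft)).card)) :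
    ¬ ∃ M, H.IsPerfectMatching M := by
  rintro ⟨M, hle, hpw, hcov⟩
  have hmem : ∀ e ∈ M, e ∈ H.edges := fun e he => Multiset.mem_of_le hle he
  apply hodd
  have key : H.verts.filter (fun v => v.isLeft)
      = M.toFinset.biUnion (fun e => e.filter (fun v => v.isLeft)) := by
    ext v
    simp only [Finset.mem_filter, Finset.mem_biUnion, Multiset.mem_toFinset]
    constructor
    · rintro ⟨hv, hL⟩
      obtain ⟨e, he, hve⟩ := hcov v hv
      exact ⟨e, he, hve, hL⟩
    · rintro ⟨e, he, hv, hL⟩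
      exact ⟨(hedge e (hmem e he)).1 hv, hL⟩
  rw [key, Finset.card_biUnion]
  · refine Finset.sum_induction _ Even (fun a b ha hb => ha.add hb) Even.zero ?_
    intro e he
    exact (hedge e (hmem e (Multiset.mem_toFinset.mp he))).2.2
  · intro x hx y hy hxy
    exact Finset.disjoint_filter_filter
      (pairwise_forall hpw x (Multiset.mem_toFinset.mp hx) y (Multiset.mem_toFinset.mp hy) hxy)

/-- For a `(m+2)`-uniform hypergraph on `(m+2)*c` vertices with edges inside `verts`,
having a perfect matching is equivalent to having a matching of `c` edges. -/
lemma count_ne_zero_iff {H : HGraph TeethV} {m c : ℕ}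
    (hedge : ∀ e ∈ H.edges, e ⊆ H.verts ∧ e.card = m + 2)
    (hverts : H.verts.card = (m+2) * c) :
    H.matchingCount c ≠ 0 ↔ ∃ M, H.IsPerfectMatching M := by
  classical
  have hcount : ∀ M : Multiset (Finset TeethV), M ≤ H.edges → M.Pairwise Disjoint →
      M.Nodup ∧ M.toFinset.card = M.card ∧
        (M.toFinset.biUnion id).card = (m+2) * M.card := by
    intro M hle hpw
    have hmem : ∀ e ∈ M, e ∈ H.edges := fun e he => Multiset.mem_of_le hle he
    have hnd : M.Nodup := nodup_of_pairwise (fun e he =>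
      Finset.card_pos.mp (by rw [(hedge e (hmem e he)).2]; omega)) hpw
    refine ⟨hnd, Multiset.toFinset_card_eq_card_iff_nodup.mpr hnd, ?_⟩
    rw [card_biUnion_eq hpw]
    rw [Finset.sum_congr rfl (fun e he => (hedge e (hmem e (Multiset.mem_toFinset.mp he))).2),
      Finset.sum_const, smul_eq_mul, Multiset.toFinset_card_eq_card_iff_nodup.mpr hnd,
      Nat.mul_comm]
  have hmc : H.matchingCount c
      = Multiset.card ((H.edges.powersetCard c).filter fun M => M.Pairwise Disjoint) := by
    rw [HGraph.matchingCount]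
  constructor
  · intro h
    have h' : ((H.edges.powersetCard c).filter fun M => M.Pairwise Disjoint) ≠ 0 := by
      rw [hmc] at h
      exact fun h0 => h (by rw [h0]; rfl)
    obtain ⟨M, hM⟩ := Multiset.exists_mem_of_ne_zero h'
    rw [Multiset.mem_filter, Multiset.mem_powersetCard] at hM
    obtain ⟨⟨hle, hcard⟩, hpw⟩ := hM
    obtain ⟨hnd, htc, hbu⟩ := hcount M hle hpw
    have hsub : M.toFinset.biUnion id ⊆ H.verts := by
      intro v hv
      rw [Finset.mem_biUnion] at hv
      obtain ⟨e, he, hv⟩ := hv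
      exact (hedge e (Multiset.mem_of_le hle (Multiset.mem_toFinset.mp he))).1 hv
    have heq : M.toFinset.biUnion id = H.verts :=
      Finset.eq_of_subset_of_card_le hsub (by rw [hbu, hcard, hverts])
    refine ⟨M, hle, hpw, ?_⟩
    intro v hv
    rw [← heq, Finset.mem_biUnion] at hv
    obtain ⟨e, he, hv⟩ := hv
    exact ⟨e, Multiset.mem_toFinset.mp he, hv⟩
  · rintro ⟨M, hle, hpw, hcov⟩
    obtain ⟨hnd, htc, hbu⟩ := hcount M hle hpw
    have heq : M.toFinset.biUnion id = H.verts :=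
      biUnion_eq (fun e he => (hedge e (Multiset.mem_of_le hle he)).1) hcov
    have hcard : M.card = c := by
      refine Nat.eq_of_mul_eq_mul_left (show 0 < m + 2 by omega) ?_
      rw [← hbu, heq, hverts]
    have hMmem : M ∈ (H.edges.powersetCard c).filter fun M => M.Pairwise Disjoint :=
      Multiset.mem_filter.mpr ⟨Multiset.mem_powersetCard.mpr ⟨hle, hcard⟩, hpw⟩
    rw [hmc, Ne, Multiset.card_eq_zero]
    exact fun h => by simp [h] at hMmem

end Teeth
namespace Teeth
open Finset

lemma const_coeff {m ℓ : ℕ} (H : HGraph TeethV) (hverts : H.verts.card = (m+2)*(ℓ+1)) :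
    (HGraph.matchingPoly (m+2) H).coeff 0
      = (-1)^(ℓ+1) * (H.matchingCount (ℓ+1) : ℚ) := by
  have hdiv : H.verts.card / (m+2) = ℓ + 1 := by
    rw [hverts]; exact Nat.mul_div_cancel_left _ (by omega)
  rw [HGraph.matchingPoly, Polynomial.finset_sum_coeff, hdiv]
  have h0 : ∀ i ∈ Finset.range (ℓ+1+1), i ≠ ℓ+1 →
      (Polynomial.C ((-1:ℚ)^i * (H.matchingCount i : ℚ)) *
        Polynomial.X ^ (H.verts.card - (m+2)*i)).coeff 0 = 0 := by
    intro i hi hne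
    rw [Finset.mem_range] at hi
    rw [Polynomial.coeff_C_mul, Polynomial.coeff_X_pow, if_neg, mul_zero]
    rw [hverts]
    have h2 := Nat.mul_le_mul_left (m+2) (show i + 1 ≤ ℓ + 1 by omega)
    rw [Nat.mul_succ] at h2
    omega
  have h1 : (ℓ+1) ∉ Finset.range (ℓ+1+1) →
      (Polynomial.C ((-1:ℚ)^(ℓ+1) * (H.matchingCount (ℓ+1) : ℚ)) *
        Polynomial.X ^ (H.verts.card - (m+2)*(ℓ+1))).coeff 0 = 0 := by
    intro h
    exact absurd (Finset.mem_range.mpr (by omega)) h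
  rw [Finset.sum_eq_single (ℓ+1) h0 h1, Polynomial.coeff_C_mul, Polynomial.coeff_X_pow,
    if_pos (by rw [hverts]; omega), mul_one]

end Teeth

/-- for even `ℓ`, `AT(k,ℓ)` has a perfect matching and `MT(k,ℓ)`
does not; for odd `ℓ` the reverse; consequently their matching polynomials differ. -/
theorem teeth_perfect_matchings (k ℓ : ℕ) (hk : 2 ≤ k) :
    (Even ℓ → (∃ M, (ATeeth k ℓ).IsPerfectMatching M) ∧
      ¬ (∃ M, (MTeeth k ℓ).IsPerfectMatching M)) ∧
    (Odd ℓ → (∃ M, (MTeeth k ℓ).IsPerfectMatching M) ∧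
      ¬ (∃ M, (ATeeth k ℓ).IsPerfectMatching M)) ∧
    HGraph.matchingPoly k (ATeeth k ℓ) ≠ HGraph.matchingPoly k (MTeeth k ℓ) := by
  open Teeth in
  obtain ⟨m, rfl⟩ : ∃ m, k = m + 2 := ⟨k - 2, by omega⟩
  have hATedge : ∀ e ∈ (ATeeth (m+2) ℓ).edges,
      e ⊆ (ATeeth (m+2) ℓ).verts ∧ e.card = m+2 := by
    intro e he
    rcases AT_edge_mem he with ⟨i, hi, rfl⟩ | ⟨j, h1, h2, rfl⟩
    · exact ⟨eE_subset_AT hi, card_eE m i⟩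
    · exact ⟨fE_subset_AT h1 h2, card_fE m j⟩
  have hMTedge : ∀ e ∈ (MTeeth (m+2) ℓ).edges,
      e ⊆ (MTeeth (m+2) ℓ).verts ∧ e.card = m+2 := by
    intro e he
    rcases MT_edge_mem he with ⟨i, hi, rfl⟩ | ⟨j, h1, h2, rfl⟩
    · exact ⟨eE_subset_MT hi, card_eE m i⟩
    · exact ⟨fE_subset_MT h1 h2, card_fE m j⟩
  have hATiff := count_ne_zero_iff hATedge (AT_verts_card m ℓ)
  have hMTiff := count_ne_zero_iff hMTedge (MT_verts_card m ℓ)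
  have hATex : Even ℓ → ∃ M, (ATeeth (m+2) ℓ).IsPerfectMatching M := by
    rintro ⟨t, rfl⟩
    have h := AT_pm m t
    rw [two_mul] at h
    exact ⟨_, h⟩
  have hMTex : Odd ℓ → ∃ M, (MTeeth (m+2) ℓ).IsPerfectMatching M := by
    rintro ⟨t, rfl⟩
    exact ⟨_, MT_pm m t⟩
  have hATnone : Odd ℓ → ¬ ∃ M, (ATeeth (m+2) ℓ).IsPerfectMatching M := by
    intro ho
    refine no_pm_of_odd ?_ ?_
    · intro e he
      refine ⟨(hATedge e he).1, Finset.card_pos.mp (by rw [(hATedge e he).2]; omega), ?_⟩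
      rcases AT_edge_mem he with ⟨i, hi, rfl⟩ | ⟨j, h1, h2, rfl⟩
      · exact ⟨1, by rw [filter_eE_card]⟩
      · exact ⟨0, by rw [filter_fE_card]⟩
    · rw [AT_filter_card]
      obtain ⟨t, rfl⟩ := ho
      rw [Nat.even_iff]
      omega
  have hMTnone : Even ℓ → ¬ ∃ M, (MTeeth (m+2) ℓ).IsPerfectMatching M := by
    intro he
    refine no_pm_of_odd ?_ ?_
    · intro e he'
      refine ⟨(hMTedge e he').1, Finset.card_pos.mp (by rw [(hMTedge e he').2]; omega), ?_⟩
      rcases MT_edge_mem he' with ⟨i, hi, rfl⟩ | ⟨j, h1, h2, rfl⟩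
      · exact ⟨1, by rw [filter_eE_card]⟩
      · exact ⟨0, by rw [filter_fE_card]⟩
    · rw [MT_filter_card]
      obtain ⟨t, rfl⟩ := he
      rw [Nat.even_iff]
      omega
  refine ⟨fun he => ⟨hATex he, hMTnone he⟩, fun ho => ⟨hMTex ho, hATnone ho⟩, ?_⟩
  intro hpoly
  have hc := congrArg (fun p => p.coeff 0) hpoly
  simp only [const_coeff _ (AT_verts_card m ℓ), const_coeff _ (MT_verts_card m ℓ)] at hc
  have hcount : (ATeeth (m+2) ℓ).matchingCount (ℓ+1)
      = (MTeeth (m+2) ℓ).matchingCount (ℓ+1) := by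
    have h := mul_left_cancel₀ (show ((-1:ℚ)^(ℓ+1)) ≠ 0 by simp) hc
    exact_mod_cast h
  rcases Nat.even_or_odd ℓ with he | ho
  · exact hMTnone he (hMTiff.mp (hcount ▸ hATiff.mpr (hATex he)))
  · exact hATnone ho (hATiff.mp (hcount ▸ hMTiff.mpr (hMTex ho)))
end
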